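/- Let ν > 0 and 0 ≤ γ₁ < γ₂ with √γ₂ − √γ₁ ≤ ν and 3γ₁ + γ₂ ≤ ν². Set κ = ν/2 − (1/2)√(ν² − 4γ₁), p₁₂ = ν/2 + (τ/2)√(ν² − 3γ₁ − γ₂) and p₂₂ = (1/2)(ν² − 2γ₁ + τν√(ν² − 3γ₁ − γ₂)) for any τ ∈ [−1,1]. Then P = [[1,p₁₂],[p₁₂,p₂₂]] is symmetric positive definite and Q_γ P + P Q_γᵀ − 2κ P is positive semi-definite for all γ ∈ [γ₁, γ₂], where Q_γ = [[0,1],[−γ,ν]]. -/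

import Mathlib

/-!
For a symmetric `2 × 2` matrix, positive (semi)definiteness reduces to the sign of the corner
entry and of the determinant. With `r = √(ν² - 4γ₁)` and `s = √(ν² - 3γ₁ - γ₂)` one has
`det P = (r² - τ²s²) / 4`, and the `(1,1)` entry of `M = Q_γ P + P Q_γᵀ - 2κP` is `r + τs`,
both positive because `r² - s² = γ₂ - γ₁ > 0`. Since `κ = (ν - r) / 2` is a root of
`λ² - νλ + γ₁`, the determinant of `M` collapses to `(γ - γ₁)(r² - τ²s² - (γ - γ₁))`; this is
nonnegative on `[γ₁, γ₂]` since `τ²s² ≤ s² = r² - (γ₂ - γ₁)`.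
-/

open Matrix

lemma isHermitian_fin_two_symm (a b c : ℝ) :
    (!![a, b; b, c] : Matrix (Fin 2) (Fin 2) ℝ).IsHermitian := by
  ext i j
  fin_cases i <;> fin_cases j <;> rfl

lemma dotProduct_mulVec_fin_two_symm (a b c : ℝ) (x : Fin 2 → ℝ) :
    star x ⬝ᵥ (!![a, b; b, c] *ᵥ x) = a * x 0 ^ 2 + 2 * b * x 0 * x 1 + c * x 1 ^ 2 := by
  simp only [dotProduct, Pi.star_apply, star_trivial, mulVec, of_apply, cons_val', cons_val_fin_one,
    Fin.sum_univ_two, cons_val_zero, cons_val_one]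
  ring

lemma posSemidef_fin_two_of_sq_le {a b c : ℝ} (ha : 0 < a) (h : b ^ 2 ≤ a * c) :
    (!![a, b; b, c] : Matrix (Fin 2) (Fin 2) ℝ).PosSemidef := by
  refine posSemidef_iff_dotProduct_mulVec.2 ⟨isHermitian_fin_two_symm a b c, fun x => ?_⟩
  rw [dotProduct_mulVec_fin_two_symm]
  refine nonneg_of_mul_nonneg_right ?_ ha
  nlinarith [sq_nonneg (a * x 0 + b * x 1), mul_nonneg (sub_nonneg.2 h) (sq_nonneg (x 1))]

lemma posDef_fin_two_of_sq_lt {a b c : ℝ} (ha : 0 < a) (h : b ^ 2 < a * c) :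
    (!![a, b; b, c] : Matrix (Fin 2) (Fin 2) ℝ).PosDef := by
  refine posDef_iff_dotProduct_mulVec.2 ⟨isHermitian_fin_two_symm a b c, fun x hx => ?_⟩
  rw [dotProduct_mulVec_fin_two_symm]
  refine pos_of_mul_pos_right ?_ ha.le
  rcases eq_or_ne (x 1) 0 with h1 | h1
  · have h0 : x 0 ≠ 0 := fun h0 => hx (funext fun i => by fin_cases i <;> simp [h0, h1])
    simp only [h1]
    nlinarith [mul_pos ha (mul_pos ha (sq_pos_of_ne_zero h0))]
  · nlinarith [sq_nonneg (a * x 0 + b * x 1), mul_pos (sub_pos.2 h) (sq_pos_of_ne_zero h1)]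

lemma companion_mul_add_mul_transpose_sub_smul {R : Type*} [CommRing R] (γ ν κ a b c : R) :
    !![0, 1; -γ, ν] * !![a, b; b, c] + !![a, b; b, c] * (!![0, 1; -γ, ν])ᵀ
        - (2 * κ) • !![a, b; b, c]
      = !![2 * b - 2 * κ * a, c - γ * a + ν * b - 2 * κ * b;
           c - γ * a + ν * b - 2 * κ * b, 2 * ν * c - 2 * γ * b - 2 * κ * c] := by
  ext i j
  fin_cases i <;> fin_cases j <;>
    simp only [Matrix.add_apply, Matrix.sub_apply, Matrix.smul_apply, mul_apply, Fin.sum_univ_two,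
      transpose_apply, of_apply, cons_val', cons_val_zero, cons_val_one, cons_val_fin_one,
      Fin.zero_eta, Fin.mk_one, smul_eq_mul] <;>
    ring

theorem stmt10_general (ν γ₁ γ₂ τ : ℝ) (hγ : γ₁ < γ₂)
    (hcone : 3 * γ₁ + γ₂ ≤ ν ^ 2)
    (hτ : τ ∈ Set.Icc (-1 : ℝ) 1) :
    let κ : ℝ := ν / 2 - Real.sqrt (ν ^ 2 - 4 * γ₁) / 2
    let p12 : ℝ := ν / 2 + (τ / 2) * Real.sqrt (ν ^ 2 - 3 * γ₁ - γ₂)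
    let p22 : ℝ := (1 / 2) * (ν ^ 2 - 2 * γ₁ + τ * ν * Real.sqrt (ν ^ 2 - 3 * γ₁ - γ₂))
    (!![1, p12; p12, p22] : Matrix (Fin 2) (Fin 2) ℝ).PosDef ∧
    ∀ γ ∈ Set.Icc γ₁ γ₂,
      ((!![0, 1; -γ, ν] : Matrix (Fin 2) (Fin 2) ℝ) * !![1, p12; p12, p22]
        + !![1, p12; p12, p22] * (!![0, 1; -γ, ν] : Matrix (Fin 2) (Fin 2) ℝ)ᵀ
        - (2 * κ) • !![1, p12; p12, p22]).PosSemidef := by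
  intro κ p12 p22
  set s := Real.sqrt (ν ^ 2 - 3 * γ₁ - γ₂)
  set r := Real.sqrt (ν ^ 2 - 4 * γ₁)
  have hs : s ^ 2 = ν ^ 2 - 3 * γ₁ - γ₂ := Real.sq_sqrt (by linarith)
  have hr : r ^ 2 = ν ^ 2 - 4 * γ₁ := Real.sq_sqrt (by linarith)
  have hτs : (τ * s) ^ 2 ≤ s ^ 2 := by
    rw [mul_pow]
    exact mul_le_of_le_one_left (sq_nonneg s) ((sq_le_one_iff_abs_le_one τ).2 (abs_le.2 hτ))
  have hτsr2 : (τ * s) ^ 2 < r ^ 2 := by linarith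
  have hτsr : |τ * s| < r := abs_lt_of_sq_lt_sq hτsr2 (Real.sqrt_nonneg _)
  have hdetP : 1 * p22 - p12 ^ 2 = (r ^ 2 - (τ * s) ^ 2) / 4 := by
    simp only [p12, p22]
    linear_combination (-1 / 4 : ℝ) * hr
  refine ⟨posDef_fin_two_of_sq_lt one_pos ?_, fun γ ⟨hγ₁γ, hγγ₂⟩ => ?_⟩
  · linarith
  rw [companion_mul_add_mul_transpose_sub_smul]
  have hdetM : (2 * p12 - 2 * κ * 1) * (2 * ν * p22 - 2 * γ * p12 - 2 * κ * p22)
      - (p22 - γ * 1 + ν * p12 - 2 * κ * p12) ^ 2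
        = (γ - γ₁) * (r ^ 2 - (τ * s) ^ 2 - (γ - γ₁)) := by
    simp only [p12, p22, κ]
    linear_combination (ν ^ 2 / 4 - (τ * s) ^ 2 / 4 - γ) * hr
  refine posSemidef_fin_two_of_sq_le ?_ ?_
  · simp only [p12, κ]
    linarith [neg_abs_le (τ * s)]
  · have := mul_nonneg (sub_nonneg.2 hγ₁γ) (by linarith : 0 ≤ r ^ 2 - (τ * s) ^ 2 - (γ - γ₁))
    linarith

/-- explicit admissible matrices in the case `3γ₁ + γ₂ ≤ ν²`. -/
theorem stmt10 (ν γ₁ γ₂ τ : ℝ) (hν : 0 < ν) (hγ₁ : 0 ≤ γ₁) (hγ : γ₁ < γ₂)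
    (hres : Real.sqrt γ₂ - Real.sqrt γ₁ ≤ ν) (hcone : 3 * γ₁ + γ₂ ≤ ν ^ 2)
    (hτ : τ ∈ Set.Icc (-1 : ℝ) 1) :
    let κ : ℝ := ν / 2 - Real.sqrt (ν ^ 2 - 4 * γ₁) / 2
    let p12 : ℝ := ν / 2 + (τ / 2) * Real.sqrt (ν ^ 2 - 3 * γ₁ - γ₂)
    let p22 : ℝ := (1 / 2) * (ν ^ 2 - 2 * γ₁ + τ * ν * Real.sqrt (ν ^ 2 - 3 * γ₁ - γ₂))
    (!![1, p12; p12, p22] : Matrix (Fin 2) (Fin 2) ℝ).PosDef ∧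
    ∀ γ ∈ Set.Icc γ₁ γ₂,
      ((!![0, 1; -γ, ν] : Matrix (Fin 2) (Fin 2) ℝ) * !![1, p12; p12, p22]
        + !![1, p12; p12, p22] * (!![0, 1; -γ, ν] : Matrix (Fin 2) (Fin 2) ℝ)ᵀ
        - (2 * κ) • !![1, p12; p12, p22]).PosSemidef :=
  stmt10_general ν γ₁ γ₂ τ hγ hcone hτ
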